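/- arXiv:cs/0203022 — 2 statements merged into one kernel-verified Lean document; each statement's English description precedes it below -/
import Mathlib

section
/- Let S be a sharing abstraction over X, L ⊆ X, and t a term with var(t) ⊆ X. If E ∈ γ_Sh(S) ∩ γ_Lin(L) and θ ∈ imgu(E), then χ(θ(t)) ≤ χ(t, S, L). -/
open scoped Classical

namespace SharingPaper

/-- Finite first-order terms over an arity-indexed alphabet `F`, with
variables drawn from the countably infinite set `ℕ` (playing the role of `U`). -/
inductive Term (F : ℕ → Type) : Type
  | var : ℕ → Term F
  | app : (n : ℕ) → F n → (Fin n → Term F) → Term F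

namespace Term

variable {F : ℕ → Type}

/-- The set `var(t)` of variables occurring in a term. -/
def vars : Term F → Set ℕ
  | var x => {x}
  | app n _ ts => ⋃ i : Fin n, vars (ts i)

/-- Number of occurrences of the variable `x` in a term. -/
def count (x : ℕ) : Term F → ℕ
  | var y => if y = x then 1 else 0
  | app n _ ts => ∑ i : Fin n, count x (ts i)

/-- `χ(x, t) = min(2, number of occurrences of x in t)`. -/
def chiVar (x : ℕ) (t : Term F) : ℕ := min 2 (t.count x)

/-- `χ(t) = max {χ(x, t) | x ∈ U}`. -/
noncomputable def mult (t : Term F) : ℕ := sSup (Set.range fun x => chiVar x t)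

end Term

variable {F : ℕ → Type}

/-- Substitutions, represented as maps from variables to terms. -/
abbrev Subst (F : ℕ → Type) := ℕ → Term F

namespace Subst

/-- Homomorphic extension of a substitution to terms. -/
def apply (θ : Subst F) : Term F → Term F
  | .var x => θ x
  | .app n f ts => .app n f fun i => apply θ (ts i)

/-- `dom(θ) = {u | θ(u) ≠ u}`. -/
def dom (θ : Subst F) : Set ℕ := {x | θ x ≠ .var x}

/-- `rng(θ) = ∪ {var(θ(u)) | u ∈ dom(θ)}`. -/
def rng (θ : Subst F) : Set ℕ := ⋃ x ∈ dom θ, (θ x).vars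

/-- A genuine substitution has a finite domain. -/
def IsSubst (θ : Subst F) : Prop := (dom θ).Finite

/-- Composition: `(θ ∘ ψ)(u) = θ(ψ(u))`. -/
def comp (θ ψ : Subst F) : Subst F := fun x => θ.apply (ψ x)

/-- `θ` is idempotent iff `dom(θ) ∩ rng(θ) = ∅`. -/
def Idempotent (θ : Subst F) : Prop := dom θ ∩ rng θ = ∅

/-- `θ ≤ ψ` iff `ψ = δ ∘ θ` for some substitution `δ`. -/
def Le (θ ψ : Subst F) : Prop := ∃ δ : Subst F, IsSubst δ ∧ ψ = comp δ θ

/-- `occ(θ, y) = {u ∈ U | y ∈ var(θ(u))}`. -/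
def occ (θ : Subst F) (y : ℕ) : Set ℕ := {u | y ∈ (θ u).vars}

/-- `α_Sh(θ) = {occ(θ, u) ∩ X | u ∈ U}`. -/
def alphaSh (X : Set ℕ) (θ : Subst F) : Set (Set ℕ) :=
  Set.range fun u => occ θ u ∩ X

/-- An assignment `M ⊆ U` models `θ` iff for every `x ↦ t ∈ θ`, `x ∈ M ↔ var(t) ⊆ M`. -/
def Models (M : Set ℕ) (θ : Subst F) : Prop :=
  ∀ x ∈ dom θ, (x ∈ M ↔ (θ x).vars ⊆ M)

/-- `θ` satisfies a Pos abstraction `f` over `X` iff `M ∩ X ∈ f` for every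
assignment `M` that models `θ`. -/
def Satisfies (X : Set ℕ) (θ : Subst F) (f : Set (Set ℕ)) : Prop :=
  ∀ M : Set ℕ, Models M θ → M ∩ X ∈ f

end Subst

/-- The set of unifiers of a set of equations. -/
def unif (E : Set (Term F × Term F)) : Set (Subst F) :=
  {θ | Subst.IsSubst θ ∧ ∀ p ∈ E, θ.apply p.1 = θ.apply p.2}

/-- Most general unifiers. -/
def mgu (E : Set (Term F × Term F)) : Set (Subst F) :=
  {θ ∈ unif E | ∀ ψ ∈ unif E, Subst.Le θ ψ}

/-- Idempotent most general unifiers. -/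
def imgu (E : Set (Term F × Term F)) : Set (Subst F) :=
  {θ ∈ mgu E | Subst.Idempotent θ}

/-- `γ_Sh(S)`. -/
def gammaSh (X : Set ℕ) (S : Set (Set ℕ)) : Set (Set (Term F × Term F)) :=
  {E | E.Finite ∧ ∃ θ ∈ imgu E, Subst.alphaSh X θ ⊆ S}

/-- `γ_Fr(F)`. -/
def gammaFr (Fv : Set ℕ) : Set (Set (Term F × Term F)) :=
  {E | E.Finite ∧ ∃ θ ∈ imgu E, ∀ x ∈ Fv, ∃ y, θ x = Term.var y}

/-- `γ_Lin(L)`. -/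
def gammaLin (L : Set ℕ) : Set (Set (Term F × Term F)) :=
  {E | E.Finite ∧ ∃ θ ∈ imgu E, ∀ x ∈ L, (θ x).mult ≤ 1}

/-- `γ_Pos(f)`. -/
def gammaPos (X : Set ℕ) (f : Set (Set ℕ)) : Set (Set (Term F × Term F)) :=
  {E | E.Finite ∧ ∃ θ ∈ imgu E, Subst.Satisfies X θ f}

/-- `γ_SFL(S, F, L)`. -/
def gammaSFL (X : Set ℕ) (S : Set (Set ℕ)) (Fv L : Set ℕ) :
    Set (Set (Term F × Term F)) :=
  gammaSh X S ∩ gammaFr Fv ∩ gammaLin L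

/-- `var(S) = ∪ {G | G ∈ S}`. -/
def varS {α : Type*} (S : Set (Set α)) : Set α := ⋃ G ∈ S, G

/-- `rel(t, S) = {G ∈ S | var(t) ∩ G ≠ ∅}`. -/
def rel (t : Term F) (S : Set (Set ℕ)) : Set (Set ℕ) :=
  {G ∈ S | t.vars ∩ G ≠ ∅}

/-- Closure `S*`: the least superset of `S` closed under binary unions. -/
def closure {α : Type*} (S : Set (Set α)) : Set (Set α) :=
  ⋂₀ {S' | S ⊆ S' ∧ ∀ G1 ∈ S', ∀ G2 ∈ S', G1 ∪ G2 ∈ S'}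

/-- Pairwise union `S1 ⊎ S2`. -/
def pairUnion {α : Type*} (S1 S2 : Set (Set α)) : Set (Set α) :=
  {G | ∃ G1 ∈ S1, ∃ G2 ∈ S2, G = G1 ∪ G2}

/-- `S^{*F}`: the least superset `S'` of `S` such that `G1 ∪ G2 ∈ S'` whenever
`G1, G2 ∈ S'` and `G1 ∩ G2 ∩ F = ∅`. -/
def closureF {α : Type*} (Fv : Set α) (S : Set (Set α)) : Set (Set α) :=
  ⋂₀ {S' | S ⊆ S' ∧ ∀ G1 ∈ S', ∀ G2 ∈ S', G1 ∩ G2 ∩ Fv = ∅ → G1 ∪ G2 ∈ S'}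

/-- `S1 ⊎_F S2`. -/
def pairUnionF {α : Type*} (Fv : Set α) (S1 S2 : Set (Set α)) : Set (Set α) :=
  {G | ∃ G1 ∈ S1, ∃ G2 ∈ S2, (G1 ≠ G2 → G1 ∩ G2 ∩ Fv = ∅) ∧ G = G1 ∪ G2}

/-- The Filé decomposition `K_F(S)`. -/
def KF {α : Type*} (Fv : Set α) (S : Set (Set α)) : Set (Set (Set α)) :=
  {B | B ⊆ S ∧ Fv ⊆ varS B ∧
    ∀ G1 ∈ B, ∀ G2 ∈ B, G1 ≠ G2 → G1 ∩ G2 ∩ Fv = ∅}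

/-- Abstract multiplicity `χ(t, S, L)`. -/
noncomputable def chiA (t : Term F) (S : Set (Set ℕ)) (L : Set ℕ) : ℕ :=
  if (∃ x ∈ varS S, Term.chiVar x t = 2) ∨
     (∃ x ∈ varS S, x ∈ t.vars \ L) ∨
     (∃ G ∈ S, ∃ x ∈ t.vars, ∃ y ∈ t.vars, x ≠ y ∧ x ∈ G ∧ y ∈ G)
  then 2 else 1

/-- The term `t` is a variable belonging to the freeness set `Fv` ("t ∈ F"). -/
def IsFreeTerm (t : Term F) (Fv : Set ℕ) : Prop := ∃ x ∈ Fv, t = Term.var x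

/-- The term `t` is a variable ("t ∈ U"). -/
def IsVarTerm (t : Term F) : Prop := ∃ x, t = Term.var x


/-! If `χ(t, S, L) = 1`, fix a variable `z`. Every occurrence of `z` in `θ(t)` comes from an
occurrence in `t` of some `x` with `z ∈ var(θ(x))`. All such `x` lie in the sharing group
`occ(θ, z) ∩ X ∈ S`, hence there is at most one of them; it occurs once in `t` and lies in `L`,
so `z` occurs once in `θ(x)`. The abstractions `S` and `L` are witnessed by possibly different
imgus of `E`, but any two imgus of `E` differ by an injective renaming of the variables outside
their domain, which preserves sharing groups (up to `∅`) and multiplicities. -/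

theorem sum_le_one_of_pos_imp_eq {ι : Type*} [Fintype ι] {c : ι → ℕ}
    (hc : ∀ i, c i ≤ 1) (huniq : ∀ i j, 0 < c i → 0 < c j → i = j) : ∑ i, c i ≤ 1 := by
  by_cases h : ∃ i, 0 < c i
  · obtain ⟨i, hi⟩ := h
    rw [Finset.sum_eq_single i (fun j _ hji => by by_contra hj; exact hji (huniq j i (by omega) hi))
      (by simp)]
    exact hc i
  · push Not at h
    simp [fun i => Nat.le_zero.1 (h i)]

namespace Term

theorem count_pos_iff (x : ℕ) : ∀ t : Term F, 0 < t.count x ↔ x ∈ t.vars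
  | .var y => by
      rw [count, vars, Set.mem_singleton_iff]
      split_ifs with h <;> simp [h, Ne.symm]
  | .app n f ts => by simp [count, vars, Finset.sum_pos_iff, count_pos_iff x (ts _)]

theorem count_eq_zero_of_notMem {x : ℕ} {t : Term F} (h : x ∉ t.vars) : t.count x = 0 :=
  Nat.eq_zero_of_not_pos (mt (count_pos_iff x t).1 h)

theorem vars_subset_app {n : ℕ} (f : F n) (ts : Fin n → Term F) (i : Fin n) :
    (ts i).vars ⊆ (app n f ts).vars :=
  Set.subset_iUnion (fun j => (ts j).vars) i

theorem count_le_count_app {n : ℕ} (f : F n) (ts : Fin n → Term F) (i : Fin n) (x : ℕ) :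
    (ts i).count x ≤ (app n f ts).count x :=
  Finset.single_le_sum (f := fun j => (ts j).count x) (fun _ _ => Nat.zero_le _)
    (Finset.mem_univ i)

theorem two_le_count_app {n : ℕ} (f : F n) (ts : Fin n → Term F) {i j : Fin n} (hij : i ≠ j)
    {x : ℕ} (hi : x ∈ (ts i).vars) (hj : x ∈ (ts j).vars) : 2 ≤ (app n f ts).count x := by
  have hi := (count_pos_iff x _).2 hi
  have hj := (count_pos_iff x _).2 hj
  have := Finset.add_le_sum (f := fun k => (ts k).count x) (fun _ _ => Nat.zero_le _)
    (Finset.mem_univ i) (Finset.mem_univ j) hij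
  simp only [count]
  omega

theorem bddAbove_range_chiVar (t : Term F) : BddAbove (Set.range fun x => chiVar x t) :=
  ⟨2, by rintro _ ⟨x, rfl⟩; exact min_le_left _ _⟩

theorem mult_le_iff {t : Term F} {k : ℕ} : t.mult ≤ k ↔ ∀ x, chiVar x t ≤ k :=
  (csSup_le_iff (bddAbove_range_chiVar t) (Set.range_nonempty _)).trans Set.forall_mem_range

theorem mult_le_two (t : Term F) : t.mult ≤ 2 :=
  mult_le_iff.2 fun _ => min_le_left _ _

theorem mult_le_one_iff {t : Term F} : t.mult ≤ 1 ↔ ∀ x, t.count x ≤ 1 := by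
  simp only [mult_le_iff, chiVar]
  exact forall_congr' fun x => by omega

end Term

namespace Subst

theorem vars_apply (θ : Subst F) : ∀ t : Term F, (θ.apply t).vars = ⋃ x ∈ t.vars, (θ x).vars
  | .var y => by simp [apply, Term.vars]
  | .app n f ts => by simp only [apply, Term.vars, vars_apply θ (ts _), Set.biUnion_iUnion]

theorem exists_eq_var_of_apply_eq_var (θ : Subst F) {s : Term F} {y : ℕ}
    (h : θ.apply s = .var y) : ∃ w, s = .var w := by
  cases s with
  | var w => exact ⟨w, rfl⟩
  | app n f ts => simp [apply] at h

theorem vars_subset_compl_dom {θ : Subst F} (hθ : θ.Idempotent) (u : ℕ) :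
    (θ u).vars ⊆ θ.domᶜ := by
  by_cases hu : u ∈ θ.dom
  · exact fun z hz hzd => (Set.eq_empty_iff_forall_notMem.1 hθ) z ⟨hzd, Set.mem_biUnion hu hz⟩
  · rw [show θ u = .var u from not_not.1 hu]
    rintro z rfl
    exact hu

theorem occ_eq_empty_of_mem_dom {θ : Subst F} (hθ : θ.Idempotent) {z : ℕ} (hz : z ∈ θ.dom) :
    θ.occ z = ∅ :=
  Set.eq_empty_of_forall_notMem fun u hu => vars_subset_compl_dom hθ u hu hz

theorem exists_rename_of_comp_eq {θ ψ δ δ' : Subst F} (hψ : ψ = comp δ θ) (hθ : θ = comp δ' ψ) :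
    ∃ ρ : ℕ → ℕ, (∀ y ∈ θ.domᶜ, δ y = .var (ρ y)) ∧ Set.InjOn ρ θ.domᶜ := by
  have h : ∀ y, ∃ w, y ∉ θ.dom → δ y = .var w ∧ δ' w = .var y := by
    intro y
    by_cases hy : y ∈ θ.dom
    · exact ⟨0, absurd hy⟩
    have hθy : θ y = .var y := not_not.1 hy
    have hback : δ'.apply (δ y) = .var y := by
      have := congrFun hθ y
      rwa [comp, hψ, comp, hθy, apply, eq_comm] at this
    obtain ⟨w, hw⟩ := exists_eq_var_of_apply_eq_var δ' hback
    rw [hw, apply] at hback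
    exact ⟨w, fun _ => ⟨hw, hback⟩⟩
  choose ρ hρ using h
  refine ⟨ρ, fun y hy => (hρ y hy).1, fun y₁ h₁ y₂ h₂ he => ?_⟩
  have e := (hρ y₁ h₁).2
  rw [he, (hρ y₂ h₂).2] at e
  exact (Term.var.inj e).symm

theorem count_apply_le_one (θ : Subst F) (z : ℕ) : ∀ t : Term F,
    (∀ x ∈ t.vars ∩ θ.occ z, t.count x ≤ 1) → (∀ x ∈ t.vars, (θ x).count z ≤ 1) →
    (t.vars ∩ θ.occ z).Subsingleton → (θ.apply t).count z ≤ 1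
  | .var x, _, hθ, _ => hθ x rfl
  | .app n f ts, ht, hθ, hocc => by
      have hsub := Term.vars_subset_app f ts
      have hpos : ∀ i, 0 < (θ.apply (ts i)).count z → ∃ x ∈ (ts i).vars, z ∈ (θ x).vars := by
        intro i hi
        simpa [vars_apply] using (Term.count_pos_iff z _).1 hi
      rw [apply, Term.count]
      refine sum_le_one_of_pos_imp_eq (fun i => count_apply_le_one θ z (ts i)
          (fun x hx => (Term.count_le_count_app f ts i x).trans (ht x ⟨hsub i hx.1, hx.2⟩))
          (fun x hx => hθ x (hsub i hx))
          (hocc.anti (Set.inter_subset_inter_left _ (hsub i)))) fun i j hi hj => ?_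
      obtain ⟨x, hxi, hx⟩ := hpos i hi
      obtain ⟨y, hyj, hy⟩ := hpos j hj
      obtain rfl : x = y := hocc ⟨hsub i hxi, hx⟩ ⟨hsub j hyj, hy⟩
      by_contra hij
      have := ht x ⟨hsub i hxi, hx⟩
      have := Term.two_le_count_app f ts hij hxi hyj
      omega

section Rename

variable {δ : Subst F} {V : Set ℕ} {ρ : ℕ → ℕ}

theorem vars_apply_rename (hρ : ∀ y ∈ V, δ y = .var (ρ y)) :
    ∀ s : Term F, s.vars ⊆ V → (δ.apply s).vars = ρ '' s.vars
  | .var y, hs => by simp [apply, hρ y (hs rfl), Term.vars]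
  | .app n f ts, hs => by
      simp only [apply, Term.vars, Set.image_iUnion]
      exact Set.iUnion_congr fun i =>
        vars_apply_rename hρ (ts i) ((Term.vars_subset_app f ts i).trans hs)

theorem count_apply_rename (hρ : ∀ y ∈ V, δ y = .var (ρ y)) (hinj : Set.InjOn ρ V) :
    ∀ s : Term F, s.vars ⊆ V → ∀ y ∈ V, (δ.apply s).count (ρ y) = s.count y
  | .var w, hs, y, hy => by
      have hw : w ∈ V := hs rfl
      simp only [apply, hρ w hw, Term.count, hinj.eq_iff hw hy]
  | .app n f ts, hs, y, hy => by
      simp only [apply, Term.count]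
      exact Finset.sum_congr rfl fun i _ =>
        count_apply_rename hρ hinj (ts i) ((Term.vars_subset_app f ts i).trans hs) y hy

theorem mult_apply_rename_le (hρ : ∀ y ∈ V, δ y = .var (ρ y)) (hinj : Set.InjOn ρ V)
    (s : Term F) (hs : s.vars ⊆ V) : (δ.apply s).mult ≤ s.mult := by
  refine Term.mult_le_iff.2 fun z => ?_
  by_cases hz : z ∈ (δ.apply s).vars
  · rw [vars_apply_rename hρ s hs] at hz
    obtain ⟨y, hy, rfl⟩ := hz
    rw [Term.chiVar, count_apply_rename hρ hinj s hs y (hs hy)]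
    exact Term.mult_le_iff.1 le_rfl y
  · rw [Term.chiVar, Term.count_eq_zero_of_notMem hz]
    exact Nat.zero_le _

theorem occ_comp_rename (hρ : ∀ y ∈ V, δ y = .var (ρ y)) (hinj : Set.InjOn ρ V)
    {θ : Subst F} (hθ : ∀ u, (θ u).vars ⊆ V) {z : ℕ} (hz : z ∈ V) :
    (comp δ θ).occ (ρ z) = θ.occ z := by
  ext u
  simp only [occ, comp, Set.mem_ofPred_eq, vars_apply_rename hρ (θ u) (hθ u),
    hinj.mem_image_iff (hθ u) hz]

end Rename

end Subst

theorem alphaSh_subset_insert_empty {E : Set (Term F × Term F)} {θ ψ : Subst F}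
    (hθ : θ ∈ imgu E) (hψ : ψ ∈ mgu E) (X : Set ℕ) :
    Subst.alphaSh X θ ⊆ insert ∅ (Subst.alphaSh X ψ) := by
  obtain ⟨δ, -, hδ⟩ := hθ.1.2 ψ hψ.1
  obtain ⟨δ', -, hδ'⟩ := hψ.2 θ hθ.1.1
  obtain ⟨ρ, hρ, hinj⟩ := Subst.exists_rename_of_comp_eq hδ hδ'
  rintro _ ⟨z, rfl⟩
  by_cases hz : z ∈ θ.dom
  · simp [Subst.occ_eq_empty_of_mem_dom hθ.2 hz]
  · refine Or.inr ⟨ρ z, ?_⟩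
    simp only [hδ, Subst.occ_comp_rename hρ hinj (Subst.vars_subset_compl_dom hθ.2) hz]

theorem mult_mgu_le_mult_imgu {E : Set (Term F × Term F)} {θ ψ : Subst F}
    (hθ : θ ∈ imgu E) (hψ : ψ ∈ mgu E) (x : ℕ) : (ψ x).mult ≤ (θ x).mult := by
  obtain ⟨δ, -, hδ⟩ := hθ.1.2 ψ hψ.1
  obtain ⟨δ', -, hδ'⟩ := hψ.2 θ hθ.1.1
  obtain ⟨ρ, hρ, hinj⟩ := Subst.exists_rename_of_comp_eq hδ hδ'
  rw [hδ]
  exact Subst.mult_apply_rename_le hρ hinj (θ x) (Subst.vars_subset_compl_dom hθ.2 x)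

theorem mult_apply_le_one_of_alphaSh_subset {X : Set ℕ} {S : Set (Set ℕ)} {L : Set ℕ}
    {θ : Subst F} {t : Term F} (ht : t.vars ⊆ X) (hSh : Subst.alphaSh X θ ⊆ S)
    (hLin : ∀ x ∈ L, (θ x).mult ≤ 1) (hcount : ∀ x ∈ varS S, Term.chiVar x t ≠ 2)
    (hL : ∀ x ∈ varS S, x ∈ t.vars → x ∈ L)
    (hindep : ∀ G ∈ S, ∀ x ∈ t.vars, ∀ y ∈ t.vars, x ∈ G → y ∈ G → x = y) :
    (θ.apply t).mult ≤ 1 := by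
  have hG : ∀ z, θ.occ z ∩ X ∈ S := fun z => hSh ⟨z, rfl⟩
  have hvarS : ∀ z, ∀ x ∈ t.vars ∩ θ.occ z, x ∈ varS S := fun z x hx =>
    Set.mem_biUnion (hG z) ⟨hx.2, ht hx.1⟩
  refine Term.mult_le_one_iff.2 fun z => Subst.count_apply_le_one θ z t
    (fun x hx => ?_) (fun x hx => ?_) (fun x hx y hy => ?_)
  · have := hcount x (hvarS z x hx)
    rw [Term.chiVar] at this
    omega
  · by_cases hz : z ∈ (θ x).vars
    · exact Term.mult_le_one_iff.1 (hLin x (hL x (hvarS z x ⟨hx, hz⟩) hx)) z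
    · rw [Term.count_eq_zero_of_notMem hz]
      exact zero_le_one
  · exact hindep _ (hG z) x hx.1 y hy.1 ⟨hx.2, ht hx.1⟩ ⟨hy.2, ht hy.1⟩

theorem stmt6_general {F : ℕ → Type} (X : Set ℕ)
    (S : Set (Set ℕ)) (hS : ∅ ∈ S)
    (L : Set ℕ)
    (t : Term F) (ht : t.vars ⊆ X)
    (E : Set (Term F × Term F))
    (hE : E ∈ (gammaSh X S ∩ gammaLin L : Set (Set (Term F × Term F))))
    (θ : Subst F) (hθ : θ ∈ imgu E) :
    (θ.apply t).mult ≤ chiA t S L := by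
  obtain ⟨⟨-, θ₁, hθ₁, hSh₁⟩, -, θ₂, hθ₂, hLin₂⟩ := hE
  have hSh : Subst.alphaSh X θ ⊆ S :=
    (alphaSh_subset_insert_empty hθ hθ₁.1 X).trans (Set.insert_subset hS hSh₁)
  have hLin : ∀ x ∈ L, (θ x).mult ≤ 1 := fun x hx =>
    (mult_mgu_le_mult_imgu hθ₂ hθ.1 x).trans (hLin₂ x hx)
  unfold chiA
  split_ifs with h
  · exact Term.mult_le_two _
  · exact mult_apply_le_one_of_alphaSh_subset ht hSh hLin
      (fun x hx h2 => h (.inl ⟨x, hx, h2⟩))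
      (fun x hx hxt => by_contra fun hxL => h (.inr (.inl ⟨x, hx, hxt, hxL⟩)))
      (fun G hG x hx y hy hxG hyG => by_contra fun hxy =>
        h (.inr (.inr ⟨G, hG, x, hx, y, hy, hxy, hxG, hyG⟩)))

/-- if `E ∈ γ_Sh(S) ∩ γ_Lin(L)` and `θ ∈ imgu(E)` then
`χ(θ(t)) ≤ χ(t, S, L)`. -/
theorem stmt6 {F : ℕ → Type} (X : Set ℕ) (hX : X.Finite)
    (S : Set (Set ℕ)) (hS : ∅ ∈ S) (hSX : ∀ G ∈ S, G ⊆ X)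
    (L : Set ℕ) (hL : L ⊆ X)
    (t : Term F) (ht : t.vars ⊆ X)
    (E : Set (Term F × Term F))
    (hE : E ∈ (gammaSh X S ∩ gammaLin L : Set (Set (Term F × Term F))))
    (θ : Subst F) (hθ : θ ∈ imgu E) :
    (θ.apply t).mult ≤ chiA t S L :=
  stmt6_general X S hS L t ht E hE θ hθ

end SharingPaper
end

section
/- Let X be a set, F ⊆ X, S a set of subsets of X, B ∈ K_F(S), and R1, R2 ⊆ B. Then R1* ⊎ R2 = R1* ⊎_F R2. -/
namespace SharingPaper

/-!
Members of `B` pairwise meet only outside `F`. An element of `R1*` is a finite union of members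
of `R1`; in its union with `G2 ∈ R2`, the copy of `G2` (if it occurs) can be dropped from the
first union, which then either is `G2` itself or meets `G2` only outside `F`.
-/

section

variable {α : Type*}

theorem subset_closure (S : Set (Set α)) : S ⊆ closure S :=
  fun _ hG _ hS' => hS'.1 hG

theorem union_mem_closure {S : Set (Set α)} {G₁ G₂ : Set α} (h₁ : G₁ ∈ closure S)
    (h₂ : G₂ ∈ closure S) : G₁ ∪ G₂ ∈ closure S :=
  fun S' hS' => hS'.2 G₁ (h₁ S' hS') G₂ (h₂ S' hS')

@[elab_as_elim]
theorem closure_induction {S : Set (Set α)} {P : Set α → Prop} (mem : ∀ G ∈ S, P G)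
    (union : ∀ G₁ G₂, P G₁ → P G₂ → P (G₁ ∪ G₂)) {G : Set α} (hG : G ∈ closure S) : P G :=
  hG {G | P G} ⟨mem, fun G₁ h₁ G₂ h₂ => union G₁ G₂ h₁ h₂⟩

theorem exists_mem_closure_union_eq {Fv H : Set α} {R : Set (Set α)}
    (hR : ∀ K ∈ R, K ≠ H → K ∩ H ∩ Fv = ∅) {G : Set α} (hG : G ∈ closure R) :
    ∃ G' ∈ closure R, (G' ≠ H → G' ∩ H ∩ Fv = ∅) ∧ G' ∪ H = G ∪ H := by
  refine closure_induction (fun K hK => ⟨K, subset_closure R hK, hR K hK, rfl⟩)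
    (fun A C hA hC => ?_) hG
  obtain ⟨A', hA'R, hA'H, hA'⟩ := hA
  obtain ⟨C', hC'R, hC'H, hC'⟩ := hC
  have hAC : A ∪ C ∪ H = (A' ∪ H) ∪ (C' ∪ H) := by
    rw [hA', hC', Set.union_union_distrib_right]
  by_cases hA'_eq : A' = H
  · refine ⟨C', hC'R, hC'H, ?_⟩
    rw [hAC, hA'_eq, Set.union_self, Set.union_eq_right.2 Set.subset_union_right]
  by_cases hC'_eq : C' = H
  · refine ⟨A', hA'R, hA'H, ?_⟩
    rw [hAC, hC'_eq, Set.union_self, Set.union_eq_left.2 Set.subset_union_right]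
  refine ⟨A' ∪ C', union_mem_closure hA'R hC'R, fun _ => ?_, ?_⟩
  · rw [Set.union_inter_distrib_right, Set.union_inter_distrib_right, hA'H hA'_eq,
      hC'H hC'_eq, Set.union_empty]
  · rw [hAC, Set.union_union_distrib_right]

theorem pairUnionF_subset_pairUnion (Fv : Set α) (S₁ S₂ : Set (Set α)) :
    pairUnionF Fv S₁ S₂ ⊆ pairUnion S₁ S₂ := by
  rintro _ ⟨G₁, h₁, G₂, h₂, -, rfl⟩
  exact ⟨G₁, h₁, G₂, h₂, rfl⟩

end

/-- if `B ∈ K_F(S)` and `R1, R2 ⊆ B` then `R1* ⊎ R2 = R1* ⊎_F R2`. -/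
theorem stmt12 {α : Type*} (Fv : Set α) (S : Set (Set α))
    (B : Set (Set α)) (hB : B ∈ KF Fv S)
    (R1 R2 : Set (Set α)) (hR1 : R1 ⊆ B) (hR2 : R2 ⊆ B) :
    pairUnion (closure R1) R2 = pairUnionF Fv (closure R1) R2 := by
  refine Set.Subset.antisymm ?_ (pairUnionF_subset_pairUnion Fv _ _)
  rintro _ ⟨G₁, h₁, G₂, h₂, rfl⟩
  obtain ⟨G', hG'R, hG'G₂, hG'⟩ := exists_mem_closure_union_eq
    (fun K hK => hB.2.2 K (hR1 hK) G₂ (hR2 h₂)) h₁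
  exact ⟨G', hG'R, G₂, h₂, hG'G₂, hG'.symm⟩

end SharingPaper
end
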